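/- arXiv:2604.27442 — 3 statements merged into one kernel-verified Lean document; each statement's English description precedes it below -/
import Mathlib

section
/- Verification of the local eigenvalue growth condition for logistic regression: suppose there exist constants D₁, D₂, D₃ > 0 such that for every t ∈ ℕ with t ≥ D₁ p, λ_min( Σ_{s ∈ I_t(D₂)} x_sature multiplied x_sᵀ ) ≥ D₃ t, where I_t(τ) = {s ∈ {1,…,t} : |x_sᵀθ⋆| ≤ τ}; suppose further that sup_{t∈ℕ} ‖x_t‖₂ · r ≤ D₄ for some constant D₄ > 0. Then there exists a constant K > 0 depending only on D₂, D₃, D₄ such that for every t ∈ ℕ with t ≥ D₁ p and every sequence θ̄₁, …, θ̄_t ∈ Θ_r, λ_min( Σ_{s=1}^{t} b''(x_sᵀθ̄_s) x_s x_sᵀ ) ≥ K t. -/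
open Matrix Real
open scoped RealInnerProductSpace BigOperators

noncomputable section

/-- Vectors in `ℝ^p` with the Euclidean (`ℓ²`) norm. -/
abbrev Vec (p : ℕ) := EuclideanSpace ℝ (Fin p)

/-- Real `p × p` matrices. -/
abbrev Mat (p : ℕ) := Matrix (Fin p) (Fin p) ℝ

/-- A matrix applied to a Euclidean vector. -/
def mApp {p : ℕ} (A : Mat p) (v : Vec p) : Vec p := Matrix.toEuclideanLin A v

/-- The quadratic form `vᵀ A v`. -/
def quadForm {p : ℕ} (A : Mat p) (v : Vec p) : ℝ := ⟪v, mApp A v⟫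

/-- The `ℓ² → ℓ²` operator (spectral) norm of a matrix. -/
def specNorm {p : ℕ} (A : Mat p) : ℝ :=
  ‖LinearMap.toContinuousLinearMap (Matrix.toEuclideanLin A)‖

/-- The outer product `v vᵀ`. -/
def outer {p : ℕ} (v : Vec p) : Mat p :=
  Matrix.vecMulVec (fun i => v i) (fun i => v i)

/-- The logistic log-partition function `b(η) = log(1 + e^η)`. -/
def logisticB (η : ℝ) : ℝ := Real.log (1 + Real.exp η)

/-- Its first derivative `b'(η) = e^η/(1 + e^η)`. -/
def logisticB' (η : ℝ) : ℝ := Real.exp η / (1 + Real.exp η)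

/-- Its second derivative (logistic variance function)
`b''(η) = e^η/(1 + e^η)²`. -/
def logisticB'' (η : ℝ) : ℝ := Real.exp η / (1 + Real.exp η) ^ 2

/-- The Hessian `∇²ℓ_t(θ) = b''(x_tᵀθ) x_t x_tᵀ` of the logistic loss. -/
def logisticHess {p : ℕ} (xv : Vec p) (θ : Vec p) : Mat p :=
  logisticB'' ⟪xv, θ⟫ • outer xv

attribute [local instance] Classical.propDecidable

lemma logisticB''_eq (η : ℝ) : logisticB'' η = (2 * Real.cosh η + 2)⁻¹ := by
  unfold logisticB''
  rw [Real.cosh_eq, Real.exp_neg]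
  have h := Real.exp_pos η
  field_simp
  ring

lemma logisticB''_pos (η : ℝ) : 0 < logisticB'' η := by
  unfold logisticB''; positivity

lemma logisticB''_mono {η M : ℝ} (h : |η| ≤ M) : logisticB'' M ≤ logisticB'' η := by
  rw [logisticB''_eq, logisticB''_eq]
  have hM : 0 ≤ M := le_trans (abs_nonneg η) h
  have h1 : 0 < 2 * Real.cosh η + 2 := by have := Real.cosh_pos (x := η); linarith
  have h2 : Real.cosh η ≤ Real.cosh M := by
    rw [Real.cosh_le_cosh]; rwa [abs_of_nonneg hM]
  exact inv_anti₀ h1 (by linarith)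

lemma quadForm_sum {p : ℕ} (s : Finset ℕ) (f : ℕ → Mat p) (v : Vec p) :
    quadForm (∑ i ∈ s, f i) v = ∑ i ∈ s, quadForm (f i) v := by
  unfold quadForm mApp
  rw [map_sum, LinearMap.sum_apply, inner_sum]

lemma quadForm_smul {p : ℕ} (c : ℝ) (A : Mat p) (v : Vec p) :
    quadForm (c • A) v = c * quadForm A v := by
  unfold quadForm mApp
  rw [_root_.map_smul, LinearMap.smul_apply, real_inner_smul_right]

lemma quadForm_outer {p : ℕ} (x v : Vec p) : quadForm (outer x) v = ⟪x, v⟫ ^ 2 := by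
  simp only [quadForm, mApp, outer, Matrix.toEuclideanLin_apply, PiLp.inner_apply,
    RCLike.inner_apply, conj_trivial, Matrix.mulVec, Matrix.vecMulVec_apply, dotProduct]
  rw [sq, Finset.sum_mul_sum]
  refine Finset.sum_congr rfl fun i _ => ?_
  rw [Finset.sum_mul]
  exact Finset.sum_congr rfl fun j _ => by ring

/-- verification of the local eigenvalue growth condition
(A1) for logistic regression (Proposition 4 of the paper).  The lower bound
`λ_min(A) ≥ c` for the symmetric matrix `A` is expressed by the equivalent
Rayleigh-quotient bound `∀ v, c‖v‖² ≤ vᵀAv`, and `I_t(D₂)` by a `filter`. -/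
theorem stmt12 :
    ∀ D₂ D₃ D₄ : ℝ, 0 < D₂ → 0 < D₃ → 0 < D₄ →
    ∃ K : ℝ, 0 < K ∧
    ∀ (p : ℕ) (xv : ℕ → Vec p) (θstar : Vec p) (r D₁ : ℝ),
      0 < r → 0 < D₁ →
      (∀ t : ℕ, D₁ * p ≤ (t : ℝ) → ∀ v : Vec p,
        D₃ * t * ‖v‖ ^ 2 ≤
          quadForm (∑ s ∈ (Finset.Icc 1 t).filter
              (fun s => |⟪xv s, θstar⟫| ≤ D₂), outer (xv s)) v) →
      (∀ t : ℕ, ‖xv t‖ * r ≤ D₄) →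
      ∀ t : ℕ, D₁ * p ≤ (t : ℝ) → ∀ θbar : ℕ → Vec p,
        (∀ s ∈ Finset.Icc 1 t, ‖θbar s - θstar‖ ≤ r) →
        ∀ v : Vec p, K * t * ‖v‖ ^ 2 ≤
          quadForm (∑ s ∈ Finset.Icc 1 t, logisticHess (xv s) (θbar s)) v := by
  intro D₂ D₃ D₄ hD₂ hD₃ hD₄
  refine ⟨logisticB'' (D₂ + D₄) * D₃, mul_pos (logisticB''_pos _) hD₃, ?_⟩
  intro p xv θstar r D₁ hr hD₁ hA hB t ht θbar hθ v
  set c := logisticB'' (D₂ + D₄) with hc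
  have hcpos := logisticB''_pos (D₂ + D₄)
  have key : ∀ s ∈ (Finset.Icc 1 t).filter (fun s => |⟪xv s, θstar⟫| ≤ D₂),
      c ≤ logisticB'' ⟪xv s, θbar s⟫ := by
    intro s hs
    obtain ⟨hs1, hs2⟩ := Finset.mem_filter.mp hs
    apply logisticB''_mono
    have h1 : ⟪xv s, θbar s⟫ = ⟪xv s, θstar⟫ + ⟪xv s, θbar s - θstar⟫ := by
      rw [inner_sub_right]; ring
    have h2 : |⟪xv s, θbar s - θstar⟫| ≤ D₄ :=
      calc |⟪xv s, θbar s - θstar⟫| ≤ ‖xv s‖ * ‖θbar s - θstar‖ := abs_real_inner_le_norm _ _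
        _ ≤ ‖xv s‖ * r := mul_le_mul_of_nonneg_left (hθ s hs1) (norm_nonneg _)
        _ ≤ D₄ := hB s
    rw [h1]
    calc |⟪xv s, θstar⟫ + ⟪xv s, θbar s - θstar⟫|
        ≤ |⟪xv s, θstar⟫| + |⟪xv s, θbar s - θstar⟫| := abs_add_le _ _
      _ ≤ D₂ + D₄ := add_le_add hs2 h2
  have step1 : ∑ s ∈ (Finset.Icc 1 t).filter (fun s => |⟪xv s, θstar⟫| ≤ D₂),
      c * ⟪xv s, v⟫ ^ 2 ≤
      quadForm (∑ s ∈ Finset.Icc 1 t, logisticHess (xv s) (θbar s)) v := by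
    rw [quadForm_sum]
    have heq : ∀ s, quadForm (logisticHess (xv s) (θbar s)) v
        = logisticB'' ⟪xv s, θbar s⟫ * ⟪xv s, v⟫ ^ 2 := fun s => by
      rw [logisticHess, quadForm_smul, quadForm_outer]
    calc ∑ s ∈ (Finset.Icc 1 t).filter (fun s => |⟪xv s, θstar⟫| ≤ D₂), c * ⟪xv s, v⟫ ^ 2
        ≤ ∑ s ∈ (Finset.Icc 1 t).filter (fun s => |⟪xv s, θstar⟫| ≤ D₂),
            logisticB'' ⟪xv s, θbar s⟫ * ⟪xv s, v⟫ ^ 2 :=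
          Finset.sum_le_sum fun s hs => mul_le_mul_of_nonneg_right (key s hs) (sq_nonneg _)
      _ ≤ ∑ s ∈ Finset.Icc 1 t, logisticB'' ⟪xv s, θbar s⟫ * ⟪xv s, v⟫ ^ 2 :=
          Finset.sum_le_sum_of_subset_of_nonneg (Finset.filter_subset _ _)
            (fun s _ _ => mul_nonneg (logisticB''_pos _).le (sq_nonneg _))
      _ = ∑ s ∈ Finset.Icc 1 t, quadForm (logisticHess (xv s) (θbar s)) v := by
          exact Finset.sum_congr rfl fun s _ => (heq s).symm
  refine le_trans ?_ step1
  rw [← Finset.mul_sum]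
  have h3 := hA t ht v
  rw [quadForm_sum] at h3
  simp only [quadForm_outer] at h3
  calc c * D₃ * t * ‖v‖ ^ 2 = c * (D₃ * t * ‖v‖ ^ 2) := by ring
    _ ≤ c * ∑ s ∈ (Finset.Icc 1 t).filter (fun s => |⟪xv s, θstar⟫| ≤ D₂), ⟪xv s, v⟫ ^ 2 :=
        mul_le_mul_of_nonneg_left h3 hcpos.le
end
end

section
/- Ratio bound for the logistic variance function: with b(η) = log(1 + e^η), for all η₁, η₂ ∈ R one has b''(η₁)/b''(η₂) ≤ e^{3|η₁ − η₂|}, i.e. b''(η₁) ≤ e^{3|η₁ − η₂|} b''(η₂). -/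
noncomputable section

/-- ratio bound for the logistic variance function
(Lemma 10 of the paper): `b''(η₁) ≤ e^{3|η₁ − η₂|} b''(η₂)`. -/
theorem stmt15 (η₁ η₂ : ℝ) :
    logisticB'' η₁ ≤ Real.exp (3 * |η₁ - η₂|) * logisticB'' η₂ := by
  unfold logisticB''
  set a := Real.exp η₁ with ha
  set b := Real.exp η₂ with hb
  set t := Real.exp |η₁ - η₂| with ht
  have ha0 : 0 < a := Real.exp_pos _
  have hb0 : 0 < b := Real.exp_pos _
  have ht1 : 1 ≤ t := Real.one_le_exp (abs_nonneg _)
  have h1 : a ≤ t * b := by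
    rw [ha, hb, ht, ← Real.exp_add]
    exact Real.exp_le_exp.2 (by linarith [le_abs_self (η₁ - η₂)])
  have h2 : b ≤ t * a := by
    rw [ha, hb, ht, ← Real.exp_add]
    exact Real.exp_le_exp.2 (by linarith [neg_abs_le (η₁ - η₂)])
  have hE : Real.exp (3 * |η₁ - η₂|) = t ^ 3 := by
    rw [ht, ← Real.exp_nat_mul]; norm_num [mul_comm]
  rw [hE, mul_div_assoc', div_le_div_iff₀ (by positivity) (by positivity)]
  have h3 : 1 + b ≤ t * (1 + a) := by nlinarith
  nlinarith [mul_le_mul h1 (mul_self_nonneg (1 + b)) (by positivity) (by positivity : (0:ℝ) ≤ t * b),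
    mul_le_mul h3 h3 (by positivity) (by positivity : (0:ℝ) ≤ t * (1 + a)),
    mul_pos ha0 hb0, sq_nonneg (1 + a), sq_nonneg (1 + b)]
end
end

section
/- Closed-form variational update for the quadratic surrogate: let p ∈ ℕ, θ' ∈ R^p, let Ω' be a symmetric positive definite p × p matrix, g ∈ R^p, H a symmetric positive semidefinite p × p matrix, and c ∈ R. Define the quadratic surrogate loss ℓ̃(θ) = c + ⟨g, θ − θ'⟩ + ½(θ − θ')ᵀH(θ − θ'), and for μ ∈ R^p and symmetric positive definite Ω define F(μ, Ω) = E_{θ ∼ N(μ, Ω^{−1})}[ ℓ̃(θ) ] + KL( N(μ, Ω^{−1}) ‖ N(θ', Ω'^{−1}) ). Set Ω* = Ω' + H (which is symmetric positive definite) and θ* = θ' − (Ω*)^{−1} g. Then (θ*, Ω*) minimizes F, i.e. F(θ*, Ω*) ≤ F(μ, Ω) for every μ ∈ R^p and every symmetric positive definite Ω. -/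
open Matrix MeasureTheory Real
open scoped RealInnerProductSpace BigOperators

noncomputable section

/-- The density of the Gaussian measure on `ℝ^p` with mean `m` and *precision*
(inverse covariance) matrix `Q`. -/
def gaussianPDF {p : ℕ} (m : Vec p) (Q : Mat p) (v : Vec p) : ℝ :=
  Real.sqrt Q.det / Real.sqrt ((2 * Real.pi) ^ p) *
    Real.exp (-(1 / 2) * quadForm Q (v - m))

/-- The Gaussian measure `N(m, Q⁻¹)` on `ℝ^p`, parametrized by its precision
matrix `Q`. -/
def gaussianOfPrec {p : ℕ} (m : Vec p) (Q : Mat p) : Measure (Vec p) :=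
  MeasureTheory.volume.withDensity fun v => ENNReal.ofReal (gaussianPDF m Q v)

/-- Kullback–Leibler divergence `KL(P‖Q) = ∫ log(dP/dQ) dP`. -/
def klDiv {α : Type*} [MeasurableSpace α] (P Q : Measure α) : ℝ :=
  ∫ a, Real.log ((P.rnDeriv Q) a).toReal ∂P

/-- The surrogate negative ELBO
`F(μ, Ω) = E_{N(μ,Ω⁻¹)}[ℓ̃] + KL(N(μ,Ω⁻¹) ‖ N(θ', Ω'⁻¹))`, where
`ℓ̃(θ) = c + ⟨g, θ − θ'⟩ + ½(θ − θ')ᵀH(θ − θ')`. -/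
def surrogateELBO {p : ℕ} (θ' : Vec p) (Ω' : Mat p) (g : Vec p) (H : Mat p)
    (c : ℝ) (μ : Vec p) (Q : Mat p) : ℝ :=
  (∫ v, (c + ⟪g, v - θ'⟫ + (1 / 2) * quadForm H (v - θ'))
      ∂(gaussianOfPrec μ Q))
    + klDiv (gaussianOfPrec μ Q) (gaussianOfPrec θ' Ω')

variable {p : ℕ}

open scoped MatrixOrder in
def Matrix.PosSemidef.sqrt {n : Type*} [Fintype n] [DecidableEq n] {A : Matrix n n ℝ}
    (_ : A.PosSemidef) : Matrix n n ℝ := CFC.sqrt A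

open scoped MatrixOrder in
theorem Matrix.PosSemidef.sqrt_mul_self {n : Type*} [Fintype n] [DecidableEq n]
    {A : Matrix n n ℝ} (hA : A.PosSemidef) : hA.sqrt * hA.sqrt = A :=
  CFC.sqrt_mul_sqrt_self A hA.nonneg

open scoped MatrixOrder in
theorem Matrix.PosSemidef.posSemidef_sqrt {n : Type*} [Fintype n] [DecidableEq n]
    {A : Matrix n n ℝ} (hA : A.PosSemidef) : hA.sqrt.PosSemidef :=
  (CFC.sqrt_nonneg A).posSemidef



lemma mApp_add (A : Mat p) (u v : Vec p) : mApp A (u + v) = mApp A u + mApp A v := by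
  simp [mApp, map_add]

lemma mApp_mul (A B : Mat p) (v : Vec p) : mApp (A * B) v = mApp A (mApp B v) := by
  simp [mApp, Matrix.toEuclideanLin_apply, Matrix.mulVec_mulVec]

lemma continuous_mApp (A : Mat p) : Continuous (mApp A) :=
  (Matrix.toEuclideanLin A).continuous_of_finiteDimensional

lemma continuous_quadForm (A : Mat p) : Continuous (fun v => quadForm A v) :=
  continuous_id.inner (continuous_mApp A)

lemma inner_mApp_symm {A : Mat p} (hA : A.IsHermitian) (u w : Vec p) :
    ⟪mApp A u, w⟫ = ⟪u, mApp A w⟫ := by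
  have h := Matrix.toEuclideanLin_conjTranspose_eq_adjoint A
  rw [hA.eq] at h
  calc ⟪mApp A u, w⟫ = ⟪(LinearMap.adjoint (Matrix.toEuclideanLin A)) u, w⟫ := by rw [← h]; rfl
  _ = ⟪u, mApp A w⟫ := LinearMap.adjoint_inner_left _ _ _


lemma mApp_one (v : Vec p) : mApp 1 v = v := by
  simp [mApp, Matrix.toEuclideanLin_apply]

lemma quadForm_sqrt {Q : Mat p} (hQ : Q.PosDef) (v : Vec p) :
    quadForm Q v = ‖mApp hQ.posSemidef.sqrt v‖ ^ 2 := by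
  have h1 : hQ.posSemidef.sqrt * hQ.posSemidef.sqrt = Q := hQ.posSemidef.sqrt_mul_self
  have : quadForm Q v = ⟪v, mApp (hQ.posSemidef.sqrt * hQ.posSemidef.sqrt) v⟫ := by
    rw [h1]; rfl
  rw [this, mApp_mul, ← inner_mApp_symm hQ.posSemidef.posSemidef_sqrt.1,
    real_inner_self_eq_norm_sq]

lemma det_sqrt_pos {Q : Mat p} (hQ : Q.PosDef) : 0 < hQ.posSemidef.sqrt.det := by
  have h2 : hQ.posSemidef.sqrt.det * hQ.posSemidef.sqrt.det = Q.det := by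
    rw [← Matrix.det_mul, hQ.posSemidef.sqrt_mul_self]
  have h3 := hQ.det_pos
  have h4 : 0 ≤ hQ.posSemidef.sqrt.det := by
    have hsd := hQ.posSemidef.posSemidef_sqrt
    rw [hsd.1.det_eq_prod_eigenvalues]
    apply Finset.prod_nonneg
    intro i _
    exact_mod_cast hsd.eigenvalues_nonneg i
  nlinarith

lemma det_sqrt_eq {Q : Mat p} (hQ : Q.PosDef) :
    hQ.posSemidef.sqrt.det = Real.sqrt Q.det := by
  have h2 : hQ.posSemidef.sqrt.det * hQ.posSemidef.sqrt.det = Q.det := by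
    rw [← Matrix.det_mul, hQ.posSemidef.sqrt_mul_self]
  rw [← h2, Real.sqrt_mul_self (det_sqrt_pos hQ).le]

lemma quadForm_lower {Q : Mat p} (hQ : Q.PosDef) :
    ∃ ε > 0, ∀ v : Vec p, ε * ‖v‖ ^ 2 ≤ quadForm Q v := by
  set B := hQ.posSemidef.sqrt with hB
  have hdet : IsUnit B.det := isUnit_iff_ne_zero.mpr (det_sqrt_pos hQ).ne'
  have hinv : B⁻¹ * B = 1 := Matrix.nonsing_inv_mul B hdet
  set T := LinearMap.toContinuousLinearMap (Matrix.toEuclideanLin B⁻¹) with hT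
  set C := ‖T‖ + 1 with hC
  have hCpos : 0 < C := by positivity
  refine ⟨(C ^ 2)⁻¹, by positivity, fun v => ?_⟩
  have h1 : ‖v‖ ≤ C * ‖mApp B v‖ := by
    have hv : v = T (mApp B v) := by
      show v = Matrix.toEuclideanLin B⁻¹ (mApp B v)
      rw [show Matrix.toEuclideanLin B⁻¹ (mApp B v) = mApp B⁻¹ (mApp B v) from rfl,
        ← mApp_mul, hinv, mApp_one]
    calc ‖v‖ = ‖T (mApp B v)‖ := by rw [← hv]
    _ ≤ ‖T‖ * ‖mApp B v‖ := T.le_opNorm _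
    _ ≤ C * ‖mApp B v‖ := by
        have := norm_nonneg (mApp B v); nlinarith [norm_nonneg T]
  rw [quadForm_sqrt hQ, ← hB]
  have h2 : ‖v‖ ^ 2 ≤ C ^ 2 * ‖mApp B v‖ ^ 2 := by
    nlinarith [norm_nonneg v, norm_nonneg (mApp B v)]
  rw [inv_mul_le_iff₀ (by positivity)]
  linarith


lemma det_toEuclideanLin (B : Mat p) :
    LinearMap.det (Matrix.toEuclideanLin B) = B.det := by
  rw [Matrix.toEuclideanLin_eq_toLin, LinearMap.det_toLin]

lemma map_volume_mApp {B : Mat p} (hdet : B.det ≠ 0) :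
    MeasureTheory.volume.map (Matrix.toEuclideanLin B)
      = ENNReal.ofReal |B.det|⁻¹ • (MeasureTheory.volume : Measure (Vec p)) := by
  have := Measure.map_linearMap_addHaar_eq_smul_addHaar
    (μ := (MeasureTheory.volume : Measure (Vec p))) (f := Matrix.toEuclideanLin B)
    (by rw [det_toEuclideanLin]; exact hdet)
  rw [det_toEuclideanLin, abs_inv] at this
  exact this

lemma integral_comp_mApp {B : Mat p} (hdet : B.det ≠ 0) {f : Vec p → ℝ}
    (hf : AEStronglyMeasurable f (MeasureTheory.volume : Measure (Vec p))) :
    ∫ v : Vec p, f (mApp B v) = |B.det|⁻¹ * ∫ v : Vec p, f v := by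
  have hL : AEMeasurable (Matrix.toEuclideanLin B)
      (MeasureTheory.volume : Measure (Vec p)) :=
    ((Matrix.toEuclideanLin B).continuous_of_finiteDimensional).aemeasurable
  have hmap := map_volume_mApp hdet
  have hfm : AEStronglyMeasurable f
      (MeasureTheory.volume.map (Matrix.toEuclideanLin B)) := by
    rw [hmap]
    exact hf.mono_ac Measure.smul_absolutelyContinuous
  have h1 : ∫ v : Vec p, f (mApp B v) = ∫ v, f v ∂(MeasureTheory.volume.map (Matrix.toEuclideanLin B)) := by
    rw [integral_map hL hfm]; rfl
  rw [h1, hmap, integral_smul_measure]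
  congr 1
  rw [ENNReal.toReal_ofReal (by positivity)]

lemma integrable_comp_mApp {B : Mat p} (hdet : B.det ≠ 0) {f : Vec p → ℝ}
    (hf : Integrable f (MeasureTheory.volume : Measure (Vec p))) :
    Integrable (fun v => f (mApp B v)) (MeasureTheory.volume : Measure (Vec p)) := by
  have hL : AEMeasurable (Matrix.toEuclideanLin B)
      (MeasureTheory.volume : Measure (Vec p)) :=
    ((Matrix.toEuclideanLin B).continuous_of_finiteDimensional).aemeasurable
  have hmap := map_volume_mApp hdet
  have hfm : AEStronglyMeasurable f
      (MeasureTheory.volume.map (Matrix.toEuclideanLin B)) := by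
    rw [hmap]
    exact hf.aestronglyMeasurable.mono_ac Measure.smul_absolutelyContinuous
  have : Integrable f (MeasureTheory.volume.map (Matrix.toEuclideanLin B)) := by
    rw [hmap]
    exact hf.smul_measure ENNReal.ofReal_ne_top
  exact (integrable_map_measure hfm hL).mp this

lemma integrable_rexp_neg_mul_sq_norm {b : ℝ} (hb : 0 < b) :
    Integrable (fun v : Vec p => Real.exp (-b * ‖v‖ ^ 2))
      (MeasureTheory.volume : Measure (Vec p)) := by
  have h := (GaussianFourier.integrable_cexp_neg_mul_sq_norm_add (V := Vec p)
    (b := (b : ℂ)) (by simpa using hb) 0 (0 : Vec p)).norm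
  have h2 : (fun v : Vec p => Real.exp (-b * ‖v‖^2))
      = fun a : Vec p => ‖Complex.exp (-(b:ℂ) * (‖a‖:ℂ)^2 + 0 * (⟪(0 : Vec p),a⟫ : ℝ))‖ := by
    funext a
    rw [Complex.norm_exp]
    congr 1
    simp [← Complex.ofReal_pow]
  rw [h2]
  exact h



lemma sqrt_two_pi_pow_eq : Real.sqrt ((2 * π) ^ p) = (2 * π) ^ ((p : ℝ) / 2) := by
  rw [Real.sqrt_eq_rpow, ← Real.rpow_natCast (2 * π) p, ← Real.rpow_mul (by positivity)]
  norm_num [mul_one_div]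

lemma integral_exp_neg_quadForm {Q : Mat p} (hQ : Q.PosDef) :
    ∫ v : Vec p, Real.exp (-(1/2) * quadForm Q v)
      = Real.sqrt ((2 * π) ^ p) / Real.sqrt Q.det := by
  set B := hQ.posSemidef.sqrt with hB
  have hdet : B.det ≠ 0 := (det_sqrt_pos hQ).ne'
  have h1 : ∀ v : Vec p, Real.exp (-(1/2) * quadForm Q v)
      = (fun w : Vec p => Real.exp (-(1/2) * ‖w‖^2)) (mApp B v) := by
    intro v; rw [quadForm_sqrt hQ]
  have hcont : Continuous (fun w : Vec p => Real.exp (-(1/2) * ‖w‖^2)) := by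
    continuity
  rw [show (∫ v : Vec p, Real.exp (-(1/2) * quadForm Q v))
      = ∫ v : Vec p, (fun w : Vec p => Real.exp (-(1/2) * ‖w‖^2)) (mApp B v) by
    exact integral_congr_ae (Filter.Eventually.of_forall h1)]
  rw [integral_comp_mApp hdet hcont.aestronglyMeasurable]
  have h2 : ∫ w : Vec p, Real.exp (-(1/2) * ‖w‖^2)
      = (π / (1/2)) ^ ((Module.finrank ℝ (Vec p) : ℝ) / 2) := by
    exact_mod_cast GaussianFourier.integral_rexp_neg_mul_sq_norm (by norm_num : (0:ℝ) < 1/2)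
  rw [h2]
  have h3 : (Module.finrank ℝ (Vec p) : ℝ) = p := by
    simp [finrank_euclideanSpace_fin]
  rw [h3]
  have h4 : |B.det| = Real.sqrt Q.det := by
    rw [abs_of_pos (det_sqrt_pos hQ)]; exact det_sqrt_eq hQ
  rw [h4, show π / (1/2) = 2 * π by ring, ← sqrt_two_pi_pow_eq]
  rw [div_eq_mul_inv, mul_comm]

lemma gaussianPDF_nonneg (m : Vec p) (Q : Mat p) (v : Vec p) : 0 ≤ gaussianPDF m Q v := by
  unfold gaussianPDF
  have := Real.exp_pos (-(1 / 2) * quadForm Q (v - m))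
  have h1 : (0:ℝ) ≤ Real.sqrt Q.det / Real.sqrt ((2 * Real.pi) ^ p) := by positivity
  positivity

lemma gaussianPDF_pos {Q : Mat p} (hQ : Q.PosDef) (m v : Vec p) : 0 < gaussianPDF m Q v := by
  unfold gaussianPDF
  have h0 : (0:ℝ) < (2 * Real.pi) ^ p := by positivity
  have h1 : (0:ℝ) < Real.sqrt Q.det := Real.sqrt_pos.mpr hQ.det_pos
  have h2 : (0:ℝ) < Real.sqrt ((2 * Real.pi) ^ p) := Real.sqrt_pos.mpr h0
  positivity

lemma continuous_gaussianPDF (m : Vec p) (Q : Mat p) : Continuous (gaussianPDF m Q) := by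
  unfold gaussianPDF
  exact continuous_const.mul (((continuous_const.mul
    ((continuous_quadForm Q).comp (continuous_id.sub continuous_const))).rexp))

/-- Master integrability lemma over `volume`. -/
lemma integrable_poly_gauss {Q : Mat p} (hQ : Q.PosDef) (m : Vec p) {q : Vec p → ℝ}
    (hq : Continuous q) {A B : ℝ} (hbound : ∀ v, |q v| ≤ A + B * ‖v - m‖ ^ 2) :
    Integrable (fun v => q v * Real.exp (-(1/2) * quadForm Q (v - m)))
      (MeasureTheory.volume : Measure (Vec p)) := by
  obtain ⟨ε, hε, hlow⟩ := quadForm_lower hQ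
  set δ := ε / 2 with hδ
  have hδpos : 0 < δ := by positivity
  set K := |A| + |B| * (2 / δ) with hK
  have hmaj : Integrable (fun v : Vec p => K * Real.exp (-(δ/2) * ‖v - m‖^2))
      (MeasureTheory.volume) := by
    have h1 : Integrable (fun v : Vec p => Real.exp (-(δ/2) * ‖v‖^2)) MeasureTheory.volume :=
      integrable_rexp_neg_mul_sq_norm (by positivity)
    exact (h1.comp_sub_right m).const_mul K
  apply hmaj.mono
  · exact (hq.mul ((continuous_const.mul ((continuous_quadForm Q).comp
      (continuous_id.sub continuous_const))).rexp)).aestronglyMeasurable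
  · refine Filter.Eventually.of_forall (fun v => ?_)
    have hexp : Real.exp (-(1/2) * quadForm Q (v - m)) ≤ Real.exp (-δ * ‖v - m‖^2) := by
      apply Real.exp_le_exp.mpr
      have := hlow (v - m)
      rw [hδ]; nlinarith
    have habs : |q v * Real.exp (-(1/2) * quadForm Q (v - m))|
        ≤ (|A| + |B| * ‖v - m‖^2) * Real.exp (-δ * ‖v - m‖^2) := by
      rw [abs_mul, abs_of_pos (Real.exp_pos _)]
      apply mul_le_mul _ hexp (Real.exp_pos _).le (by positivity)
      calc |q v| ≤ A + B * ‖v - m‖^2 := hbound v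
      _ ≤ |A| + |B| * ‖v - m‖^2 := by
          have := abs_nonneg (q v)
          have h2 : A ≤ |A| := le_abs_self A
          have h3 : B * ‖v-m‖^2 ≤ |B| * ‖v-m‖^2 := by
            apply mul_le_mul_of_nonneg_right (le_abs_self B) (by positivity)
          linarith
    have hkey : (|A| + |B| * ‖v - m‖^2) * Real.exp (-δ * ‖v - m‖^2)
        ≤ K * Real.exp (-(δ/2) * ‖v - m‖^2) := by
      set s := ‖v - m‖^2 with hs
      have hs0 : 0 ≤ s := by positivity
      have hxe : δ/2 * s ≤ Real.exp (δ/2 * s) := by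
        have := Real.add_one_le_exp (δ/2 * s); linarith
      have h5 : s * Real.exp (-δ * s) ≤ (2/δ) * Real.exp (-(δ/2) * s) := by
        have h6 : s ≤ (2/δ) * Real.exp (δ/2 * s) := by
          rw [div_mul_eq_mul_div, le_div_iff₀ hδpos]
          calc s * δ = 2 * (δ/2 * s) := by ring
          _ ≤ 2 * Real.exp (δ/2 * s) := by linarith
        calc s * Real.exp (-δ * s) ≤ ((2/δ) * Real.exp (δ/2 * s)) * Real.exp (-δ * s) := by
              apply mul_le_mul_of_nonneg_right h6 (Real.exp_pos _).le
        _ = (2/δ) * Real.exp (-(δ/2) * s) := by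
              rw [mul_assoc, ← Real.exp_add]; ring_nf
      have h7 : Real.exp (-δ * s) ≤ Real.exp (-(δ/2) * s) := by
        apply Real.exp_le_exp.mpr; nlinarith
      have h8 : |A| * Real.exp (-δ * s) ≤ |A| * Real.exp (-(δ/2) * s) :=
        mul_le_mul_of_nonneg_left h7 (abs_nonneg A)
      have h9 : |B| * s * Real.exp (-δ * s) ≤ |B| * ((2/δ) * Real.exp (-(δ/2) * s)) := by
        rw [mul_assoc]
        exact mul_le_mul_of_nonneg_left h5 (abs_nonneg B)
      calc (|A| + |B| * s) * Real.exp (-δ * s)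
          = |A| * Real.exp (-δ * s) + |B| * s * Real.exp (-δ * s) := by ring
      _ ≤ |A| * Real.exp (-(δ/2) * s) + |B| * ((2/δ) * Real.exp (-(δ/2) * s)) := by linarith
      _ = K * Real.exp (-(δ/2) * s) := by rw [hK]; ring
    calc ‖q v * Real.exp (-(1/2) * quadForm Q (v - m))‖
        = |q v * Real.exp (-(1/2) * quadForm Q (v - m))| := rfl
    _ ≤ (|A| + |B| * ‖v - m‖^2) * Real.exp (-δ * ‖v - m‖^2) := habs
    _ ≤ K * Real.exp (-(δ/2) * ‖v - m‖^2) := hkey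
    _ ≤ ‖K * Real.exp (-(δ/2) * ‖v - m‖^2)‖ := le_abs_self _

lemma integral_gaussianPDF {Q : Mat p} (hQ : Q.PosDef) (m : Vec p) :
    ∫ v : Vec p, gaussianPDF m Q v = 1 := by
  unfold gaussianPDF
  rw [MeasureTheory.integral_const_mul]
  have h1 : ∫ v : Vec p, Real.exp (-(1/2) * quadForm Q (v - m))
      = ∫ v : Vec p, Real.exp (-(1/2) * quadForm Q v) :=
    MeasureTheory.integral_sub_right_eq_self (fun v => Real.exp (-(1/2) * quadForm Q v)) m
  rw [h1, integral_exp_neg_quadForm hQ]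
  have h2 : (0:ℝ) < Real.sqrt Q.det := Real.sqrt_pos.mpr hQ.det_pos
  have h3 : (0:ℝ) < Real.sqrt ((2 * π) ^ p) := Real.sqrt_pos.mpr (by positivity)
  field_simp

lemma integrable_gaussianPDF {Q : Mat p} (hQ : Q.PosDef) (m : Vec p) :
    Integrable (gaussianPDF m Q) (MeasureTheory.volume : Measure (Vec p)) := by
  have := integrable_poly_gauss hQ m (q := fun _ => Real.sqrt Q.det / Real.sqrt ((2 * π) ^ p))
    continuous_const (A := |Real.sqrt Q.det / Real.sqrt ((2 * π) ^ p)|) (B := 0)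
    (fun v => by simp)
  have heq : gaussianPDF m Q = fun v => (fun _ : Vec p => Real.sqrt Q.det / Real.sqrt ((2 * π) ^ p)) v
      * Real.exp (-(1/2) * quadForm Q (v - m)) := rfl
  rw [heq]
  exact this

theorem isProbability_gaussianOfPrec {Q : Mat p} (hQ : Q.PosDef) (m : Vec p) :
    IsProbabilityMeasure (gaussianOfPrec m Q) := by
  constructor
  unfold gaussianOfPrec
  rw [withDensity_apply _ MeasurableSet.univ, setLIntegral_univ,
    ← ofReal_integral_eq_lintegral_ofReal (integrable_gaussianPDF hQ m)
      (Filter.Eventually.of_forall (gaussianPDF_nonneg m Q)),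
    integral_gaussianPDF hQ m, ENNReal.ofReal_one]

lemma measurable_gaussianDensity (m : Vec p) (Q : Mat p) :
    Measurable (fun v => ENNReal.ofReal (gaussianPDF m Q v)) :=
  (continuous_gaussianPDF m Q).measurable.ennreal_ofReal

/-- transfer of integrability to the Gaussian measure -/
lemma integrable_gauss_of_bound {Q : Mat p} (hQ : Q.PosDef) (m : Vec p) {q : Vec p → ℝ}
    (hq : Continuous q) {A B : ℝ} (hbound : ∀ v, |q v| ≤ A + B * ‖v - m‖ ^ 2) :
    Integrable q (gaussianOfPrec m Q) := by
  unfold gaussianOfPrec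
  rw [integrable_withDensity_iff (measurable_gaussianDensity m Q)
    (Filter.Eventually.of_forall (fun v => ENNReal.ofReal_lt_top))]
  have heq : ∀ v : Vec p, q v * (ENNReal.ofReal (gaussianPDF m Q v)).toReal
      = (Real.sqrt Q.det / Real.sqrt ((2 * π) ^ p)) *
        (q v * Real.exp (-(1/2) * quadForm Q (v - m))) := by
    intro v
    rw [ENNReal.toReal_ofReal (gaussianPDF_nonneg m Q v)]
    unfold gaussianPDF; ring
  rw [show (fun v => q v * (ENNReal.ofReal (gaussianPDF m Q v)).toReal)
      = fun v => (Real.sqrt Q.det / Real.sqrt ((2 * π) ^ p)) *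
        (q v * Real.exp (-(1/2) * quadForm Q (v - m))) from funext heq]
  exact (integrable_poly_gauss hQ m hq hbound).const_mul _

/-- integral over the Gaussian measure as a weighted Lebesgue integral -/
lemma integral_gaussianOfPrec (m : Vec p) (Q : Mat p) (q : Vec p → ℝ) :
    ∫ v, q v ∂(gaussianOfPrec m Q) = ∫ v, gaussianPDF m Q v * q v := by
  unfold gaussianOfPrec
  have h1 : (fun v => ENNReal.ofReal (gaussianPDF m Q v))
      = fun v => ((gaussianPDF m Q v).toNNReal : ENNReal) := rfl
  rw [h1, integral_withDensity_eq_integral_smul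
    ((continuous_gaussianPDF m Q).measurable.real_toNNReal) q]
  congr 1
  funext v
  rw [NNReal.smul_def, Real.coe_toNNReal _ (gaussianPDF_nonneg m Q v), smul_eq_mul]

lemma abs_quadForm_le (M : Mat p) : ∃ C : ℝ, 0 ≤ C ∧ ∀ u : Vec p, |quadForm M u| ≤ C * ‖u‖^2 := by
  set T := LinearMap.toContinuousLinearMap (Matrix.toEuclideanLin M) with hT
  refine ⟨‖T‖, norm_nonneg T, fun u => ?_⟩
  have h1 : |quadForm M u| ≤ ‖u‖ * ‖mApp M u‖ := abs_real_inner_le_norm u (mApp M u)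
  have h2 : ‖mApp M u‖ ≤ ‖T‖ * ‖u‖ := T.le_opNorm u
  calc |quadForm M u| ≤ ‖u‖ * ‖mApp M u‖ := h1
  _ ≤ ‖u‖ * (‖T‖ * ‖u‖) := by
      apply mul_le_mul_of_nonneg_left h2 (norm_nonneg u)
  _ = ‖T‖ * ‖u‖^2 := by ring

lemma integrable_quadForm_gauss {Q : Mat p} (hQ : Q.PosDef) (μ : Vec p) (M : Mat p) (m : Vec p) :
    Integrable (fun v => quadForm M (v - m)) (gaussianOfPrec μ Q) := by
  obtain ⟨C, hC0, hC⟩ := abs_quadForm_le M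
  have hd : ∀ v : Vec p, ‖v - m‖^2 ≤ 2*‖v - μ‖^2 + 2*‖μ - m‖^2 := by
    intro v
    have h1 : ‖v - m‖ ≤ ‖v - μ‖ + ‖μ - m‖ := by
      have := dist_triangle v μ m
      simpa [dist_eq_norm] using this
    nlinarith [norm_nonneg (v - m), norm_nonneg (v - μ), norm_nonneg (μ - m),
      sq_nonneg (‖v - μ‖ - ‖μ - m‖), pow_le_pow_left₀ (norm_nonneg (v - m)) h1 2]
  apply integrable_gauss_of_bound hQ μ (q := fun v => quadForm M (v - m))
    ((continuous_quadForm M).comp (continuous_sub_right m))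
    (A := C * (2*‖μ - m‖^2)) (B := 2*C)
  intro v
  calc |quadForm M (v - m)| ≤ C * ‖v - m‖^2 := hC (v - m)
  _ ≤ C * (2*‖v - μ‖^2 + 2*‖μ - m‖^2) := by
      apply mul_le_mul_of_nonneg_left (hd v) hC0
  _ = C * (2*‖μ - m‖^2) + 2*C * ‖v - μ‖^2 := by ring

lemma integrable_inner_gauss {Q : Mat p} (hQ : Q.PosDef) (μ : Vec p) (b : Vec p) (m : Vec p) :
    Integrable (fun v : Vec p => (⟪b, v - m⟫ : ℝ)) (gaussianOfPrec μ Q) := by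
  apply integrable_gauss_of_bound hQ μ (q := fun v : Vec p => (⟪b, v - m⟫ : ℝ))
    (continuous_const.inner ((continuous_sub_right m).comp continuous_id))
    (A := ‖b‖ * (1 + ‖μ - m‖) + ‖b‖) (B := ‖b‖)
  intro v
  have h1 : |(⟪b, v - m⟫ : ℝ)| ≤ ‖b‖ * ‖v - m‖ := abs_real_inner_le_norm b (v - m)
  have h2 : ‖v - m‖ ≤ ‖v - μ‖ + ‖μ - m‖ := by
    have := dist_triangle v μ m
    simpa [dist_eq_norm] using this
  have h3 : ‖v - μ‖ ≤ 1 + ‖v - μ‖^2 := by nlinarith [norm_nonneg (v - μ), sq_nonneg (‖v - μ‖ - 1)]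
  have hb := norm_nonneg b
  nlinarith [norm_nonneg (v - m), norm_nonneg (v - μ), norm_nonneg (μ - m)]

lemma integrable_const_gauss {Q : Mat p} (hQ : Q.PosDef) (μ : Vec p) (a : ℝ) :
    Integrable (fun _ : Vec p => a) (gaussianOfPrec μ Q) := by
  have := isProbability_gaussianOfPrec hQ μ
  exact integrable_const a

lemma gaussian_eq_withDensity {Q Ω' : Mat p} (hQ : Q.PosDef) (hΩ' : Ω'.PosDef)
    (μ θ' : Vec p) :
    gaussianOfPrec μ Q = (gaussianOfPrec θ' Ω').withDensity
      (fun v => ENNReal.ofReal (gaussianPDF μ Q v / gaussianPDF θ' Ω' v)) := by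
  unfold gaussianOfPrec
  have hk : Measurable (fun v => ENNReal.ofReal (gaussianPDF μ Q v / gaussianPDF θ' Ω' v)) :=
    (((continuous_gaussianPDF μ Q).div (continuous_gaussianPDF θ' Ω')
      (fun v => (gaussianPDF_pos hΩ' θ' v).ne')).measurable.ennreal_ofReal)
  rw [← withDensity_mul _ (measurable_gaussianDensity θ' Ω') hk]
  congr 1
  funext v
  rw [Pi.mul_apply, ← ENNReal.ofReal_mul (gaussianPDF_nonneg θ' Ω' v),
    mul_div_cancel₀ _ (gaussianPDF_pos hΩ' θ' v).ne']

lemma rnDeriv_gauss {Q Ω' : Mat p} (hQ : Q.PosDef) (hΩ' : Ω'.PosDef) (μ θ' : Vec p) :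
    (gaussianOfPrec μ Q).rnDeriv (gaussianOfPrec θ' Ω')
      =ᵐ[gaussianOfPrec μ Q]
      fun v => ENNReal.ofReal (gaussianPDF μ Q v / gaussianPDF θ' Ω' v) := by
  have hk : Measurable (fun v => ENNReal.ofReal (gaussianPDF μ Q v / gaussianPDF θ' Ω' v)) :=
    (((continuous_gaussianPDF μ Q).div (continuous_gaussianPDF θ' Ω')
      (fun v => (gaussianPDF_pos hΩ' θ' v).ne')).measurable.ennreal_ofReal)
  have := isProbability_gaussianOfPrec hΩ' θ'
  have h1 : ((gaussianOfPrec θ' Ω').withDensity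
      (fun v => ENNReal.ofReal (gaussianPDF μ Q v / gaussianPDF θ' Ω' v))).rnDeriv
        (gaussianOfPrec θ' Ω') =ᵐ[gaussianOfPrec θ' Ω']
      fun v => ENNReal.ofReal (gaussianPDF μ Q v / gaussianPDF θ' Ω' v) :=
    Measure.rnDeriv_withDensity _ hk
  rw [← gaussian_eq_withDensity hQ hΩ' μ θ'] at h1
  have hac : gaussianOfPrec μ Q ≪ gaussianOfPrec θ' Ω' := by
    rw [gaussian_eq_withDensity hQ hΩ' μ θ']
    exact withDensity_absolutelyContinuous _ _
  exact hac.ae_le h1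

lemma klDiv_gauss_eq {Q Ω' : Mat p} (hQ : Q.PosDef) (hΩ' : Ω'.PosDef) (μ θ' : Vec p) :
    klDiv (gaussianOfPrec μ Q) (gaussianOfPrec θ' Ω')
      = ∫ v, (Real.log (gaussianPDF μ Q v) - Real.log (gaussianPDF θ' Ω' v))
          ∂(gaussianOfPrec μ Q) := by
  unfold klDiv
  apply integral_congr_ae
  filter_upwards [rnDeriv_gauss hQ hΩ' μ θ'] with v hv
  rw [hv, ENNReal.toReal_ofReal
    (div_nonneg (gaussianPDF_nonneg μ Q v) (gaussianPDF_nonneg θ' Ω' v))]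
  exact Real.log_div (gaussianPDF_pos hQ μ v).ne' (gaussianPDF_pos hΩ' θ' v).ne'

lemma log_gaussianPDF {Q : Mat p} (hQ : Q.PosDef) (m v : Vec p) :
    Real.log (gaussianPDF m Q v)
      = Real.log (Real.sqrt Q.det / Real.sqrt ((2 * π) ^ p)) - (1/2) * quadForm Q (v - m) := by
  unfold gaussianPDF
  have hc : Real.sqrt Q.det / Real.sqrt ((2 * π) ^ p) ≠ 0 := by
    have h1 : (0:ℝ) < Real.sqrt Q.det := Real.sqrt_pos.mpr hQ.det_pos
    have h2 : (0:ℝ) < Real.sqrt ((2 * π) ^ p) := Real.sqrt_pos.mpr (by positivity)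
    positivity
  rw [Real.log_mul hc (Real.exp_ne_zero _), Real.log_exp]
  ring


lemma mApp_matrix_add (A B : Mat p) (v : Vec p) : mApp (A + B) v = mApp A v + mApp B v := by
  unfold mApp
  rw [map_add]
  rfl

lemma quadForm_matrix_add (A B : Mat p) (v : Vec p) :
    quadForm (A + B) v = quadForm A v + quadForm B v := by
  unfold quadForm
  rw [mApp_matrix_add, inner_add_right]

lemma quad_expand {Ωs : Mat p} (hΩs : Ωs.PosDef) (g u : Vec p) :
    quadForm Ωs (u + mApp Ωs⁻¹ g)
      = quadForm Ωs u + 2 * ⟪g, u⟫ + ⟪g, mApp Ωs⁻¹ g⟫ := by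
  set w := mApp Ωs⁻¹ g with hwdef
  have hw : mApp Ωs w = g := by
    rw [hwdef, ← mApp_mul, Matrix.mul_nonsing_inv _ (isUnit_iff_ne_zero.mpr hΩs.det_pos.ne'),
      mApp_one]
  have h1 : quadForm Ωs (u + w) = ⟪u + w, mApp Ωs u + mApp Ωs w⟫ := by
    rw [quadForm, mApp_add]
  rw [h1, inner_add_left, inner_add_right, inner_add_right, hw]
  have h2 : (⟪w, mApp Ωs u⟫ : ℝ) = ⟪g, u⟫ := by
    rw [← inner_mApp_symm hΩs.1 w u, hw]
  have h3 : (⟪u, g⟫ : ℝ) = ⟪g, u⟫ := real_inner_comm g u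
  have h4 : (⟪w, g⟫ : ℝ) = ⟪g, w⟫ := real_inner_comm g w
  rw [h2, h3, h4, quadForm]
  ring

lemma ell_eq {Ω' H : Mat p} (hΩ' : Ω'.PosDef) (hH : H.PosSemidef)
    (θ' g : Vec p) (c : ℝ) (v : Vec p) :
    c + ⟪g, v - θ'⟫ + (1/2) * quadForm H (v - θ')
      = (c - (1/2) * ⟪g, mApp (Ω' + H)⁻¹ g⟫
          - Real.log (Real.sqrt Ω'.det / Real.sqrt ((2*π)^p))
          + Real.log (Real.sqrt (Ω' + H).det / Real.sqrt ((2*π)^p)))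
        + Real.log (gaussianPDF θ' Ω' v)
        - Real.log (gaussianPDF (θ' - mApp (Ω' + H)⁻¹ g) (Ω' + H) v) := by
  have hΩs : (Ω' + H).PosDef := hΩ'.add_posSemidef hH
  rw [log_gaussianPDF hΩ' θ' v, log_gaussianPDF hΩs (θ' - mApp (Ω' + H)⁻¹ g) v]
  have hcenter : v - (θ' - mApp (Ω' + H)⁻¹ g) = (v - θ') + mApp (Ω' + H)⁻¹ g := by abel
  rw [hcenter, quad_expand hΩs g (v - θ'), quadForm_matrix_add Ω' H (v - θ')]
  ring

lemma integrable_logdiff {Q Q1 Q2 : Mat p} (hQ : Q.PosDef) (μ : Vec p)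
    (h1 : Q1.PosDef) (h2 : Q2.PosDef) (m1 m2 : Vec p) :
    Integrable (fun v => Real.log (gaussianPDF m1 Q1 v) - Real.log (gaussianPDF m2 Q2 v))
      (gaussianOfPrec μ Q) := by
  have heq : (fun v => Real.log (gaussianPDF m1 Q1 v) - Real.log (gaussianPDF m2 Q2 v))
      = fun v => ((fun _ : Vec p => Real.log (Real.sqrt Q1.det / Real.sqrt ((2*π)^p))
          - Real.log (Real.sqrt Q2.det / Real.sqrt ((2*π)^p))) v
        + ((1/2) * quadForm Q2 (v - m2) - (1/2) * quadForm Q1 (v - m1))) := by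
    funext v
    rw [log_gaussianPDF h1 m1 v, log_gaussianPDF h2 m2 v]
    ring
  rw [heq]
  exact (integrable_const_gauss hQ μ _).add
    (((integrable_quadForm_gauss hQ μ Q2 m2).const_mul (1/2)).sub
      ((integrable_quadForm_gauss hQ μ Q1 m1).const_mul (1/2)))

lemma integrable_ell {Q H : Mat p} (hQ : Q.PosDef) (μ θ' g : Vec p) (c : ℝ) :
    Integrable (fun v => c + ⟪g, v - θ'⟫ + (1/2) * quadForm H (v - θ'))
      (gaussianOfPrec μ Q) :=
  ((integrable_const_gauss hQ μ c).add (integrable_inner_gauss hQ μ g θ')).add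
    ((integrable_quadForm_gauss hQ μ H θ').const_mul (1/2))

lemma surrogate_eq {Ω' H : Mat p} (hΩ' : Ω'.PosDef) (hH : H.PosSemidef)
    (θ' g : Vec p) (c : ℝ) {Q : Mat p} (hQ : Q.PosDef) (μ : Vec p) :
    surrogateELBO θ' Ω' g H c μ Q
      = (c - (1/2) * ⟪g, mApp (Ω' + H)⁻¹ g⟫
          - Real.log (Real.sqrt Ω'.det / Real.sqrt ((2*π)^p))
          + Real.log (Real.sqrt (Ω' + H).det / Real.sqrt ((2*π)^p)))
        + ∫ v, (Real.log (gaussianPDF μ Q v)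
            - Real.log (gaussianPDF (θ' - mApp (Ω' + H)⁻¹ g) (Ω' + H) v))
            ∂(gaussianOfPrec μ Q) := by
  have hΩs : (Ω' + H).PosDef := hΩ'.add_posSemidef hH
  have hprob := isProbability_gaussianOfPrec hQ μ
  set Cval := c - (1/2) * ⟪g, mApp (Ω' + H)⁻¹ g⟫
      - Real.log (Real.sqrt Ω'.det / Real.sqrt ((2*π)^p))
      + Real.log (Real.sqrt (Ω' + H).det / Real.sqrt ((2*π)^p)) with hCval
  unfold surrogateELBO
  rw [klDiv_gauss_eq hQ hΩ' μ θ']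
  rw [← integral_add (integrable_ell hQ μ θ' g c) (integrable_logdiff hQ μ hQ hΩ' μ θ')]
  have hpt : ∀ v : Vec p, (c + ⟪g, v - θ'⟫ + (1/2) * quadForm H (v - θ'))
      + (Real.log (gaussianPDF μ Q v) - Real.log (gaussianPDF θ' Ω' v))
      = (fun _ : Vec p => Cval) v + (Real.log (gaussianPDF μ Q v)
          - Real.log (gaussianPDF (θ' - mApp (Ω' + H)⁻¹ g) (Ω' + H) v)) := by
    intro v
    have := ell_eq hΩ' hH θ' g c v
    rw [hCval]
    simp only
    linarith [this]
  rw [integral_congr_ae (Filter.Eventually.of_forall hpt)]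
  rw [integral_add (integrable_const_gauss hQ μ Cval)
    (integrable_logdiff hQ μ hQ hΩs μ (θ' - mApp (Ω' + H)⁻¹ g))]
  congr 1
  simp

lemma integral_logdiff_nonneg {Ω' H : Mat p} (hΩ' : Ω'.PosDef) (hH : H.PosSemidef)
    (θ' g : Vec p) {Q : Mat p} (hQ : Q.PosDef) (μ : Vec p) :
    0 ≤ ∫ v, (Real.log (gaussianPDF μ Q v)
        - Real.log (gaussianPDF (θ' - mApp (Ω' + H)⁻¹ g) (Ω' + H) v))
        ∂(gaussianOfPrec μ Q) := by
  have hΩs : (Ω' + H).PosDef := hΩ'.add_posSemidef hH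
  have hprob := isProbability_gaussianOfPrec hQ μ
  set θs := θ' - mApp (Ω' + H)⁻¹ g with hθs
  set ratio := fun v => gaussianPDF θs (Ω' + H) v / gaussianPDF μ Q v with hratio
  have hratio_int : Integrable ratio (gaussianOfPrec μ Q) := by
    unfold gaussianOfPrec
    rw [integrable_withDensity_iff (measurable_gaussianDensity μ Q)
      (Filter.Eventually.of_forall (fun v => ENNReal.ofReal_lt_top))]
    have heq : (fun v => ratio v * (ENNReal.ofReal (gaussianPDF μ Q v)).toReal)
        = fun v => gaussianPDF θs (Ω' + H) v := by
      funext v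
      rw [ENNReal.toReal_ofReal (gaussianPDF_nonneg μ Q v), hratio]
      exact div_mul_cancel₀ _ (gaussianPDF_pos hQ μ v).ne'
    rw [heq]
    exact integrable_gaussianPDF hΩs θs
  have h_ineq : ∀ v : Vec p, (fun v => 1 - ratio v) v
      ≤ Real.log (gaussianPDF μ Q v) - Real.log (gaussianPDF θs (Ω' + H) v) := by
    intro v
    have hpos : 0 < ratio v := div_pos (gaussianPDF_pos hΩs θs v) (gaussianPDF_pos hQ μ v)
    have hlog := Real.log_le_sub_one_of_pos hpos
    have hlogr : Real.log (ratio v)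
        = Real.log (gaussianPDF θs (Ω' + H) v) - Real.log (gaussianPDF μ Q v) :=
      Real.log_div (gaussianPDF_pos hΩs θs v).ne' (gaussianPDF_pos hQ μ v).ne'
    simp only
    linarith
  have hmono := integral_mono ((integrable_const_gauss hQ μ 1).sub hratio_int)
    (integrable_logdiff hQ μ hQ hΩs μ θs) h_ineq
  have hval : ∫ v, (1 - ratio v) ∂(gaussianOfPrec μ Q) = 0 := by
    rw [integral_sub (integrable_const_gauss hQ μ 1) hratio_int]
    have h1 : ∫ v, ratio v ∂(gaussianOfPrec μ Q) = 1 := by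
      rw [integral_gaussianOfPrec μ Q ratio]
      have heq : (fun v => gaussianPDF μ Q v * ratio v) = fun v => gaussianPDF θs (Ω' + H) v := by
        funext v
        rw [hratio, mul_comm]
        exact div_mul_cancel₀ _ (gaussianPDF_pos hQ μ v).ne'
      rw [heq]
      exact integral_gaussianPDF hΩs θs
    simp [h1]
  calc (0:ℝ) = ∫ v, (1 - ratio v) ∂(gaussianOfPrec μ Q) := hval.symm
  _ ≤ _ := hmono

/-- the closed-form variational update `Ω* = Ω' + H`,
`θ* = θ' − (Ω*)⁻¹ g` minimizes the surrogate negative ELBO over all Gaussian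
distributions `N(μ, Ω⁻¹)` with `Ω` symmetric positive definite. -/
theorem stmt19 {p : ℕ} (θ' : Vec p) (Ω' : Mat p) (hΩ' : Ω'.PosDef)
    (g : Vec p) (H : Mat p) (hH : H.PosSemidef) (c : ℝ) :
    (Ω' + H).PosDef ∧
    ∀ (μ : Vec p) (Q : Mat p), Q.PosDef →
      surrogateELBO θ' Ω' g H c (θ' - mApp (Ω' + H)⁻¹ g) (Ω' + H)
        ≤ surrogateELBO θ' Ω' g H c μ Q := by
  have hΩs : (Ω' + H).PosDef := hΩ'.add_posSemidef hH
  refine ⟨hΩs, fun μ Q hQ => ?_⟩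
  rw [surrogate_eq hΩ' hH θ' g c hΩs (θ' - mApp (Ω' + H)⁻¹ g),
    surrogate_eq hΩ' hH θ' g c hQ μ]
  have h0 : ∫ v, (Real.log (gaussianPDF (θ' - mApp (Ω' + H)⁻¹ g) (Ω' + H) v)
      - Real.log (gaussianPDF (θ' - mApp (Ω' + H)⁻¹ g) (Ω' + H) v))
      ∂(gaussianOfPrec (θ' - mApp (Ω' + H)⁻¹ g) (Ω' + H)) = 0 := by
    simp
  rw [h0, add_zero]
  have := integral_logdiff_nonneg hΩ' hH θ' g hQ μ
  linarith
end
end
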